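/- MinMax stabilization for the two-process Lossy-Link model: Consider two processes p, q with real input values a ≠ b and a silence-free pattern σ : ℕ → {pq, qp, pqp}. Define each process's decision at round r as the maximum over the views received in round r of the minimum input value contained in that view (MinMax rule; a process always receives its own view). Then both decision sequences are eventually constant and eventually equal: there exist v ∈ {a, b} and a round s such that both p and q decide v in every round r ≥ s. -/
import Mathlib


/-- The possible round graphs; in the Lossy-Link model `silent` never occurs. -/
inductive DLLGraph : Type
  | pq | qp | pqp | silent
deriving DecidableEq

/-- We model the two processes by `Bool`: `true` is `p`, `false` is `q`. -/
abbrev Proc := Bool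

/-- The in-neighborhood of a process under a round graph: a process always
hears itself, and additionally the other process when the corresponding
directed edge is present. -/
def inNbr2 : DLLGraph → Proc → Set Proc
  | DLLGraph.pq, b => if b then {true} else {true, false}
  | DLLGraph.qp, b => if b then {true, false} else {false}
  | DLLGraph.pqp, _ => {true, false}
  | DLLGraph.silent, b => {b}

/-- The set of input values a process has heard of by round `r`. -/
def leafs (σ : ℕ → DLLGraph) (input : Proc → ℝ) : ℕ → Proc → Set ℝ
  | 0, b => {input b}
  | r + 1, b => ⋃ x ∈ inNbr2 (σ (r + 1)) b, leafs σ input r x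

/-- The MinMax decision of a process at round `r + 1`: the maximum, over the
views received in round `r + 1`, of the minimum input value contained in that
view. -/
noncomputable def minMaxDec (σ : ℕ → DLLGraph) (input : Proc → ℝ)
    (r : ℕ) (b : Proc) : ℝ :=
  sSup {v : ℝ | ∃ x ∈ inNbr2 (σ (r + 1)) b, v = sInf (leafs σ input r x)}

section aux
variable (σ : ℕ → DLLGraph) (input : Proc → ℝ)

lemma self_mem_inNbr2 (g : DLLGraph) (x : Proc) : x ∈ inNbr2 g x := by
  cases g <;> cases x <;> simp [inNbr2]

lemma input_mem_leafs (r : ℕ) (x : Proc) : input x ∈ leafs σ input r x := by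
  induction r with
  | zero => simp [leafs]
  | succ n ih => exact Set.mem_biUnion (self_mem_inNbr2 _ x) ih

lemma leafs_subset (r : ℕ) (x : Proc) :
    leafs σ input r x ⊆ {input true, input false} := by
  induction r generalizing x with
  | zero => cases x <;> simp [leafs]
  | succ n ih =>
    intro v hv
    simp only [leafs, Set.mem_iUnion] at hv
    obtain ⟨y, _, hy⟩ := hv
    exact ih y hy

lemma leafs_finite (r : ℕ) (x : Proc) : (leafs σ input r x).Finite :=
  Set.Finite.subset ((Set.finite_singleton _).insert _) (leafs_subset σ input r x)

lemma leafs_nonempty (r : ℕ) (x : Proc) : (leafs σ input r x).Nonempty :=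
  ⟨input x, input_mem_leafs σ input r x⟩

lemma leafs_step_subset {r : ℕ} {x y : Proc} (h : y ∈ inNbr2 (σ (r+1)) x) :
    leafs σ input r y ⊆ leafs σ input (r+1) x :=
  fun v hv => Set.mem_biUnion h hv

lemma leafs_mono {r r' : ℕ} (h : r ≤ r') (x : Proc) :
    leafs σ input r x ⊆ leafs σ input r' x := by
  induction r' with
  | zero => rw [Nat.le_zero.mp h]
  | succ n ih =>
    rcases Nat.lt_or_ge r (n+1) with h' | h'
    · exact (ih (by omega)).trans (leafs_step_subset σ input (self_mem_inNbr2 _ x))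
    · have : r = n + 1 := by omega
      subst this; exact subset_rfl

lemma dec_single {r : ℕ} {bb x : Proc} (h : inNbr2 (σ (r+1)) bb = {x}) :
    minMaxDec σ input r bb = sInf (leafs σ input r x) := by
  unfold minMaxDec
  have : {v : ℝ | ∃ y ∈ inNbr2 (σ (r+1)) bb, v = sInf (leafs σ input r y)}
      = {sInf (leafs σ input r x)} := by
    ext v; simp [h]
  rw [this, csSup_singleton]

lemma dec_pair {r : ℕ} {bb : Proc} (h : inNbr2 (σ (r+1)) bb = {true, false}) :
    minMaxDec σ input r bb
      = max (sInf (leafs σ input r true)) (sInf (leafs σ input r false)) := by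
  unfold minMaxDec
  have : {v : ℝ | ∃ y ∈ inNbr2 (σ (r+1)) bb, v = sInf (leafs σ input r y)}
      = {sInf (leafs σ input r true), sInf (leafs σ input r false)} := by
    ext v
    constructor
    · rintro ⟨y, hy, rfl⟩
      rw [h] at hy
      rcases hy with hy | hy
      · subst hy; exact Or.inl rfl
      · simp at hy; subst hy; exact Or.inr rfl
    · rintro (rfl | rfl)
      · exact ⟨true, by rw [h]; exact Or.inl rfl, rfl⟩
      · exact ⟨false, by rw [h]; simp, rfl⟩
  rw [this, csSup_pair]

end aux

/-- MinMax stabilization in the two-process Lossy-Link model: on a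
silence-free pattern, both MinMax decision sequences are eventually constant
and equal to a common value among the two inputs. -/


theorem stmt_17 (σ : ℕ → DLLGraph) (hLL : ∀ r, σ r ≠ DLLGraph.silent)
    (a b : ℝ) (hab : a ≠ b) (input : Proc → ℝ)
    (hin : input true = a ∧ input false = b) :
    ∃ v ∈ ({a, b} : Set ℝ), ∃ s : ℕ, ∀ r ≥ s,
      minMaxDec σ input r true = v ∧ minMaxDec σ input r false = v := by
  obtain ⟨hta, htb⟩ := hin
  have hsub : ∀ r x, leafs σ input r x ⊆ ({a, b} : Set ℝ) := by
    intro r x; rw [← hta, ← htb]; exact leafs_subset σ input r x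
  have hfin := leafs_finite σ input
  have hne := leafs_nonempty σ input
  have hbdd : ∀ r x, BddBelow (leafs σ input r x) := fun r x => (hfin r x).bddBelow
  by_cases hA : ∃ s, ∀ r > s, σ r = DLLGraph.pq
  · obtain ⟨s, hs⟩ := hA
    have hstab : ∀ r ≥ s, leafs σ input r true = leafs σ input s true := by
      intro r hr
      induction r with
      | zero => rw [Nat.le_zero.mp hr]
      | succ n ih =>
        rcases Nat.lt_or_ge s (n+1) with h | h
        · have hσ : σ (n+1) = DLLGraph.pq := hs _ h
          have hstep : leafs σ input (n+1) true = leafs σ input n true := by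
            simp only [leafs, hσ]
            simp [inNbr2]
          rw [hstep, ih (by omega)]
        · rw [Nat.le_antisymm (by omega) hr]
    refine ⟨sInf (leafs σ input s true),
      hsub s true ((hne s true).csInf_mem (hfin s true)), s + 1, ?_⟩
    intro r hr
    have hσ : σ (r+1) = DLLGraph.pq := hs _ (by omega)
    have hsubq : leafs σ input s true ⊆ leafs σ input r false := by
      obtain ⟨m, rfl⟩ : ∃ m, r = m + 1 := ⟨r - 1, by omega⟩
      have hσm : σ (m+1) = DLLGraph.pq := hs _ (by omega)
      refine (leafs_mono σ input (show s ≤ m by omega) true).trans ?_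
      refine leafs_step_subset σ input ?_
      rw [hσm]; simp [inNbr2]
    constructor
    · rw [dec_single σ input (x := true) (by rw [hσ]; simp [inNbr2]),
        hstab r (by omega)]
    · rw [dec_pair σ input (by rw [hσ]; simp [inNbr2]), hstab r (by omega)]
      exact max_eq_left (csInf_le_csInf (hbdd r false) (hne s true) hsubq)
  · by_cases hB : ∃ s, ∀ r > s, σ r = DLLGraph.qp
    · obtain ⟨s, hs⟩ := hB
      have hstab : ∀ r ≥ s, leafs σ input r false = leafs σ input s false := by
        intro r hr
        induction r with
        | zero => rw [Nat.le_zero.mp hr]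
        | succ n ih =>
          rcases Nat.lt_or_ge s (n+1) with h | h
          · have hσ : σ (n+1) = DLLGraph.qp := hs _ h
            have hstep : leafs σ input (n+1) false = leafs σ input n false := by
              simp only [leafs, hσ]
              simp [inNbr2]
            rw [hstep, ih (by omega)]
          · rw [Nat.le_antisymm (by omega) hr]
      refine ⟨sInf (leafs σ input s false),
        hsub s false ((hne s false).csInf_mem (hfin s false)), s + 1, ?_⟩
      intro r hr
      have hσ : σ (r+1) = DLLGraph.qp := hs _ (by omega)
      have hsubp : leafs σ input s false ⊆ leafs σ input r true := by
        obtain ⟨m, rfl⟩ : ∃ m, r = m + 1 := ⟨r - 1, by omega⟩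
        have hσm : σ (m+1) = DLLGraph.qp := hs _ (by omega)
        refine (leafs_mono σ input (show s ≤ m by omega) false).trans ?_
        refine leafs_step_subset σ input ?_
        rw [hσm]; simp [inNbr2]
      constructor
      · rw [dec_pair σ input (by rw [hσ]; simp [inNbr2]), hstab r (by omega)]
        exact max_eq_right (csInf_le_csInf (hbdd r true) (hne s false) hsubp)
      · rw [dec_single σ input (x := false) (by rw [hσ]; simp [inNbr2]),
          hstab r (by omega)]
    · push_neg at hA hB
      obtain ⟨r1, hr1pos, hr1⟩ := hA 0
      obtain ⟨r2, hr2pos, hr2⟩ := hB 0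
      obtain ⟨k1, rfl⟩ : ∃ m, r1 = m + 1 := ⟨r1 - 1, by omega⟩
      obtain ⟨k2, rfl⟩ : ∃ m, r2 = m + 1 := ⟨r2 - 1, by omega⟩
      have hq : (false : Proc) ∈ inNbr2 (σ (k1+1)) true := by
        have := hLL (k1+1)
        cases hσ : σ (k1+1) <;> simp_all [inNbr2]
      have hp : (true : Proc) ∈ inNbr2 (σ (k2+1)) false := by
        have := hLL (k2+1)
        cases hσ : σ (k2+1) <;> simp_all [inNbr2]
      have hbmem : b ∈ leafs σ input (k1+1) true := by
        rw [← htb]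
        exact leafs_step_subset σ input hq (input_mem_leafs σ input k1 false)
      have hamem : a ∈ leafs σ input (k2+1) false := by
        rw [← hta]
        exact leafs_step_subset σ input hp (input_mem_leafs σ input k2 true)
      set R := max (k1+1) (k2+1) with hR
      have hfull : ∀ r ≥ R, ∀ x, leafs σ input r x = ({a, b} : Set ℝ) := by
        intro r hr x
        refine Set.Subset.antisymm (hsub r x) ?_
        intro v hv
        rcases hv with rfl | hv
        · cases x
          · exact leafs_mono σ input (show k2+1 ≤ r by omega) false hamem
          · rw [← hta]; exact input_mem_leafs σ input r true
        · simp only [Set.mem_singleton_iff] at hv; subst hv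
          cases x
          · rw [← htb]; exact input_mem_leafs σ input r false
          · exact leafs_mono σ input (show k1+1 ≤ r by omega) true hbmem
      have hinf : ∀ r ≥ R, ∀ x, sInf (leafs σ input r x) = a ⊓ b := by
        intro r hr x; rw [hfull r hr x, csInf_pair]
      refine ⟨a ⊓ b, ?_, R, ?_⟩
      · rcases le_total a b with h | h
        · left; exact inf_eq_left.mpr h
        · right; exact inf_eq_right.mpr h
      intro r hr
      have hiT := hinf r hr true
      have hiF := hinf r hr false
      have := hLL (r+1)
      cases hσ : σ (r+1)
      · exact ⟨by rw [dec_single σ input (x := true) (by rw [hσ]; simp [inNbr2]), hiT],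
          by rw [dec_pair σ input (by rw [hσ]; simp [inNbr2]), hiT, hiF, max_self]⟩
      · exact ⟨by rw [dec_pair σ input (by rw [hσ]; simp [inNbr2]), hiT, hiF, max_self],
          by rw [dec_single σ input (x := false) (by rw [hσ]; simp [inNbr2]), hiF]⟩
      · exact ⟨by rw [dec_pair σ input (by rw [hσ]; simp [inNbr2]), hiT, hiF, max_self],
          by rw [dec_pair σ input (by rw [hσ]; simp [inNbr2]), hiT, hiF, max_self]⟩
      · exact absurd hσ this
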